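/- Let j_c > 0, γ > 0, and let Ω ⊆ ℝ³ be a Lebesgue-measurable set. For all measurable functions f, g : Ω → ℝ³ with ∫_Ω |f|² dx < ∞ and ∫_Ω |g|² dx < ∞, the superposition x ↦ Λ_γ(f(x)) is square-integrable on Ω, and the composed maps satisfy the L²-Lipschitz estimate (∫_Ω |Λ_γ(f(x)) − Λ_γ(g(x))|² dx)^{1/2} ≤ 2 j_c γ (∫_Ω |f(x) − g(x)|² dx)^{1/2}. -/

import Mathlib

open scoped RealInnerProductSpace Topology

/-- Moreau-Yosida regularization of the max-function `x ↦ max{1, x}`. -/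
noncomputable def maxReg (γ x : ℝ) : ℝ :=
  if 1 / (2 * γ) ≤ x - 1 then x
  else if x - 1 ≤ -(1 / (2 * γ)) then 1
  else 1 + γ / 2 * (x - 1 + 1 / (2 * γ)) ^ 2

abbrev E3 := EuclideanSpace ℝ (Fin 3)

/-- The regularized dual-variable map `Λ_γ(e) = j_c γ e / max_γ{1, γ|e|}`. -/
noncomputable def Lam (jc γ : ℝ) (e : E3) : E3 :=
  (jc * γ / maxReg γ (γ * ‖e‖)) • e

/-!
Write `Λ_γ(e) = j_c • N(γ e)` with `N(v) = v / max_γ{1, |v|}`. The function `φ = max_γ{1, ·}` is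
1-Lipschitz, `φ ≥ 1` and `φ ≥ id`; for any such `φ` the map `v ↦ v / φ(|v|)` is 2-Lipschitz, since
`v / φ(|v|) - w / φ(|w|) = (v - w) / φ(|v|) + (φ(|w|) - φ(|v|)) / φ(|v|) • w / φ(|w|)`
and `|w| / φ(|w|) ≤ 1`. So `Λ_γ` is `2 j_c γ`-Lipschitz with `Λ_γ(0) = 0`, and the pointwise
bounds `|Λ_γ f| ≤ 2 j_c γ |f|` and `|Λ_γ f - Λ_γ g| ≤ 2 j_c γ |f - g|` integrate to the claims.
-/

open MeasureTheory

section Normalization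

variable {E : Type*} [NormedAddCommGroup E] [NormedSpace ℝ E]

theorem lipschitzWith_inv_smul_self {φ : ℝ → ℝ} (hφ : LipschitzWith 1 φ)
    (one_le : ∀ t, 1 ≤ φ t) (le_self : ∀ t, t ≤ φ t) :
    LipschitzWith 2 fun v : E => (φ ‖v‖)⁻¹ • v := by
  refine LipschitzWith.of_dist_le_mul fun u v => ?_
  rw [dist_eq_norm, dist_eq_norm]
  set a := φ ‖u‖
  set b := φ ‖v‖
  have ha : 0 < a := one_pos.trans_le (one_le _)
  have hb : 0 < b := one_pos.trans_le (one_le _)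
  have ha_inv : a⁻¹ ≤ 1 := inv_le_one_of_one_le₀ (one_le _)
  have hv : ‖b⁻¹ • v‖ ≤ 1 := by
    rw [norm_smul, Real.norm_of_nonneg (inv_nonneg.2 hb.le), inv_mul_le_one₀ hb]
    exact le_self _
  have hab : |b - a| ≤ ‖u - v‖ := by
    calc |b - a| = dist a b := by rw [Real.dist_eq, abs_sub_comm]
      _ ≤ dist ‖u‖ ‖v‖ := by simpa using hφ.dist_le_mul ‖u‖ ‖v‖
      _ ≤ ‖u - v‖ := by rw [Real.dist_eq]; exact abs_norm_sub_norm_le u v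
  have hsplit : a⁻¹ • u - b⁻¹ • v = a⁻¹ • (u - v) + (a⁻¹ * (b - a)) • (b⁻¹ • v) := by
    have hcoef : a⁻¹ * (b - a) * b⁻¹ = a⁻¹ - b⁻¹ := by field_simp
    rw [smul_smul, hcoef, smul_sub, sub_smul]
    abel
  calc ‖a⁻¹ • u - b⁻¹ • v‖
      ≤ ‖a⁻¹ • (u - v)‖ + ‖(a⁻¹ * (b - a)) • (b⁻¹ • v)‖ := hsplit ▸ norm_add_le _ _
    _ = a⁻¹ * ‖u - v‖ + a⁻¹ * |b - a| * ‖b⁻¹ • v‖ := by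
        rw [norm_smul, norm_smul, norm_mul, Real.norm_of_nonneg (inv_nonneg.2 ha.le),
          Real.norm_eq_abs]
    _ ≤ 1 * ‖u - v‖ + 1 * ‖u - v‖ * 1 := by gcongr
    _ = 2 * ‖u - v‖ := by ring

end Normalization

section maxReg

variable {γ : ℝ}

theorem one_le_maxReg (hγ : 0 < γ) (t : ℝ) : 1 ≤ maxReg γ t := by
  unfold maxReg
  split_ifs <;> nlinarith [one_div_pos.2 (mul_pos two_pos hγ)]

theorem self_le_maxReg (hγ : 0 < γ) (t : ℝ) : t ≤ maxReg γ t := by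
  have hc : γ * (1 / (2 * γ)) = 1 / 2 := by field_simp
  unfold maxReg
  split_ifs
  · exact le_rfl
  · linarith
  · nlinarith [sq_nonneg (t - 1 - 1 / (2 * γ))]

theorem lipschitzWith_maxReg (hγ : 0 < γ) : LipschitzWith 1 (maxReg γ) := by
  refine LipschitzWith.of_le_add fun a b => ?_
  have hc : γ * (1 / (2 * γ)) = 1 / 2 := by field_simp
  have hc0 : 0 < 1 / (2 * γ) := by positivity
  rw [Real.dist_eq]
  unfold maxReg
  -- on the quadratic piece the slope `γ (x - 1) + 1/2` lies in `[0, 1]`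
  split_ifs <;> cases abs_cases (a - b) <;>
    nlinarith [sq_nonneg (a - b), sq_nonneg (a - 1 - 1 / (2 * γ)), sq_nonneg (b - 1 - 1 / (2 * γ)),
      sq_nonneg (a - 1 + 1 / (2 * γ)), sq_nonneg (b - 1 + 1 / (2 * γ))]

end maxReg

section Lam

variable {jc γ : ℝ}

theorem Lam_eq_smul_inv_smul (hγ : 0 < γ) (e : E3) :
    Lam jc γ e = jc • (maxReg γ ‖γ • e‖)⁻¹ • γ • e := by
  rw [Lam, norm_smul, Real.norm_of_nonneg hγ.le, smul_smul, smul_smul, div_eq_mul_inv]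
  ring_nf

theorem lipschitzWith_Lam (hjc : 0 ≤ jc) (hγ : 0 < γ) :
    LipschitzWith (2 * jc * γ).toNNReal (Lam jc γ) := by
  have h := (lipschitzWith_smul jc).comp <|
    (lipschitzWith_inv_smul_self (E := E3) (lipschitzWith_maxReg hγ) (one_le_maxReg hγ)
      (self_le_maxReg hγ)).comp (lipschitzWith_smul γ)
  have hC : (2 * jc * γ).toNNReal = ‖jc‖₊ * (2 * ‖γ‖₊) := by
    ext
    rw [Real.coe_toNNReal _ (by positivity)]
    simp only [NNReal.coe_mul, coe_nnnorm, Real.norm_of_nonneg hjc, Real.norm_of_nonneg hγ.le,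
      NNReal.coe_ofNat]
    ring
  rw [hC, funext (Lam_eq_smul_inv_smul hγ)]
  exact h

theorem Lam_zero : Lam jc γ 0 = 0 := by simp [Lam]

end Lam

section L2

variable {α E F : Type*} [MeasurableSpace α] {μ : Measure α}
  [NormedAddCommGroup E] [NormedAddCommGroup F]

theorem sqrt_integral_sq_norm_le_of_norm_le {u : α → E} {v : α → F} {K : ℝ} (hK : 0 ≤ K)
    (hu : AEStronglyMeasurable u μ) (hv : MemLp v 2 μ) (huv : ∀ᵐ x ∂μ, ‖u x‖ ≤ K * ‖v x‖) :
    √(∫ x, ‖u x‖ ^ 2 ∂μ) ≤ K * √(∫ x, ‖v x‖ ^ 2 ∂μ) := by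
  have hu2 := (memLp_two_iff_integrable_sq_norm hu).1 (hv.of_le_mul hu huv)
  have hv2 := (memLp_two_iff_integrable_sq_norm hv.1).1 hv
  have hsq : ∫ x, ‖u x‖ ^ 2 ∂μ ≤ K ^ 2 * ∫ x, ‖v x‖ ^ 2 ∂μ := by
    rw [← integral_const_mul]
    refine integral_mono_ae hu2 (hv2.const_mul _) ?_
    filter_upwards [huv] with x hx
    simpa [mul_pow] using pow_le_pow_left₀ (norm_nonneg _) hx 2
  calc √(∫ x, ‖u x‖ ^ 2 ∂μ) ≤ √(K ^ 2 * ∫ x, ‖v x‖ ^ 2 ∂μ) := Real.sqrt_le_sqrt hsq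
    _ = K * √(∫ x, ‖v x‖ ^ 2 ∂μ) := by rw [Real.sqrt_mul (sq_nonneg K), Real.sqrt_sq hK]

end L2

theorem Lam_superposition_L2_lipschitz_general (jc γ : ℝ) (hjc : 0 < jc) (hγ : 0 < γ)
    (Ω : Set E3) (f g : E3 → E3)
    (hf : Measurable f) (hg : Measurable g)
    (hf2 : MeasureTheory.IntegrableOn (fun x => ‖f x‖ ^ 2) Ω)
    (hg2 : MeasureTheory.IntegrableOn (fun x => ‖g x‖ ^ 2) Ω) :
    MeasureTheory.IntegrableOn (fun x => ‖Lam jc γ (f x)‖ ^ 2) Ω ∧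
    Real.sqrt (∫ x in Ω, ‖Lam jc γ (f x) - Lam jc γ (g x)‖ ^ 2) ≤
      2 * jc * γ * Real.sqrt (∫ x in Ω, ‖f x - g x‖ ^ 2) := by
  have hK : 0 ≤ 2 * jc * γ := by positivity
  have hLam := lipschitzWith_Lam hjc.le hγ
  have hLam_le : ∀ e e', ‖Lam jc γ e - Lam jc γ e'‖ ≤ 2 * jc * γ * ‖e - e'‖ := by
    simpa [Real.coe_toNNReal _ hK] using hLam.norm_sub_le
  have hLf := (hLam.continuous.measurable.comp hf).aestronglyMeasurable (μ := volume.restrict Ω)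
  have hLg := (hLam.continuous.measurable.comp hg).aestronglyMeasurable (μ := volume.restrict Ω)
  have hfL2 := (memLp_two_iff_integrable_sq_norm hf.aestronglyMeasurable).2 hf2
  have hgL2 := (memLp_two_iff_integrable_sq_norm hg.aestronglyMeasurable).2 hg2
  refine ⟨(memLp_two_iff_integrable_sq_norm hLf).1 (hfL2.of_le_mul (c := 2 * jc * γ) hLf ?_), ?_⟩
  · exact ae_of_all _ fun x => by simpa [Lam_zero] using hLam_le (f x) 0
  · exact sqrt_integral_sq_norm_le_of_norm_le hK (hLf.sub hLg) (hfL2.sub hgL2)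
      (ae_of_all _ fun x => hLam_le (f x) (g x))

/-- The superposition `x ↦ Λ_γ(f(x))` is square-integrable on Ω and the composed
maps satisfy the L²-Lipschitz estimate with constant `2 j_c γ`. -/
theorem Lam_superposition_L2_lipschitz (jc γ : ℝ) (hjc : 0 < jc) (hγ : 0 < γ)
    (Ω : Set E3) (hΩ : MeasurableSet Ω) (f g : E3 → E3)
    (hf : Measurable f) (hg : Measurable g)
    (hf2 : MeasureTheory.IntegrableOn (fun x => ‖f x‖ ^ 2) Ω)
    (hg2 : MeasureTheory.IntegrableOn (fun x => ‖g x‖ ^ 2) Ω) :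
    MeasureTheory.IntegrableOn (fun x => ‖Lam jc γ (f x)‖ ^ 2) Ω ∧
    Real.sqrt (∫ x in Ω, ‖Lam jc γ (f x) - Lam jc γ (g x)‖ ^ 2) ≤
      2 * jc * γ * Real.sqrt (∫ x in Ω, ‖f x - g x‖ ^ 2) :=
  Lam_superposition_L2_lipschitz_general jc γ hjc hγ Ω f g hf hg hf2 hg2
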